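/- arXiv:2505.23957 — 9 statements merged into one kernel-verified Lean document; each statement's English description precedes it below -/
import Mathlib

section
/- Fix natural numbers r and n, and let S_n = { a ∈ ℕ^r : a₁+⋯+a_r ≤ n } be the lattice simplex. There exists a family of functions c_a : ℤ^r → ℤ indexed by a ∈ S_n, each given by an integer-valued polynomial in r variables, such that for every polynomial f ∈ ℚ[x₁,…,x_r] of total degree at most n satisfying f(ℤ^r) ⊆ ℤ, and every x ∈ ℤ^r, one has f(x) = Σ_{a ∈ S_n} c_a(x) · f(a). (In the terminology of the paper, S_n is integrally-poised for polynomials of degree n.) -/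
open Finset

/-- The lattice simplex `S_n = { a ∈ ℕ^r : a_1 + ⋯ + a_r ≤ n }` as a finset. -/
def latticeSimplex (r n : ℕ) : Finset (Fin r → ℕ) :=
  (Fintype.piFinset fun _ : Fin r => Finset.range (n + 1)).filter fun a => ∑ i, a i ≤ n

namespace LatticePoised
open MvPolynomial Matrix

lemma mem_latticeSimplex {r n : ℕ} {a : Fin r → ℕ} (h : ∑ i, a i ≤ n) :
    a ∈ latticeSimplex r n := by
  rw [latticeSimplex, Finset.mem_filter, Fintype.mem_piFinset]
  refine ⟨fun i => Finset.mem_range.mpr ?_, h⟩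
  have : a i ≤ ∑ j, a j := Finset.single_le_sum (fun j _ => Nat.zero_le _) (Finset.mem_univ i)
  omega

lemma descPoch_prod (x : ℤ) (k : ℕ) :
    (descPochhammer ℤ k).eval x = ∏ j ∈ Finset.range k, (x - j) := by
  induction k with
  | zero => simp [descPochhammer_zero]
  | succ k ih => rw [descPochhammer_succ_right, Finset.prod_range_succ, ← ih]; simp [mul_comm]

lemma choose_key (x : ℤ) (k : ℕ) :
    ∏ j ∈ Finset.range k, (x - j) = (k.factorial : ℤ) * Ring.choose x k := by
  rw [← descPoch_prod, Polynomial.eval_eq_smeval, Ring.descPochhammer_eq_factorial_smul_choose]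
  simp [nsmul_eq_mul]

/-- Univariate falling-factorial polynomial in the variable `i`. -/
noncomputable def P (r : ℕ) (i : Fin r) (k : ℕ) : MvPolynomial (Fin r) ℚ :=
  ∏ j ∈ Finset.range k, (X i - C (j : ℚ))

/-- The multivariate binomial basis polynomial. -/
noncomputable def q (r : ℕ) (b : Fin r → ℕ) : MvPolynomial (Fin r) ℚ :=
  C (∏ i, ((b i).factorial : ℚ))⁻¹ * ∏ i, P r i (b i)

lemma eval_q {r : ℕ} (b : Fin r → ℕ) (y : Fin r → ℤ) :
    eval (fun i => (y i : ℚ)) (q r b) = ((∏ i, Ring.choose (y i) (b i) : ℤ) : ℚ) := by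
  have hP : ∀ i : Fin r, eval (fun i => (y i : ℚ)) (P r i (b i))
      = ((∏ j ∈ Finset.range (b i), (y i - j) : ℤ) : ℚ) := by
    intro i; push_cast; simp [P]
  have hfac : (∏ i, ((b i).factorial : ℚ)) ≠ 0 := by
    apply Finset.prod_ne_zero_iff.mpr
    intro i _; exact_mod_cast (Nat.factorial_ne_zero _)
  rw [q, eval_mul, eval_C, eval_prod, Finset.prod_congr rfl fun i _ => hP i,
    ← Int.cast_prod, Finset.prod_congr rfl fun i (_ : i ∈ univ) => choose_key (y i) (b i),
    Finset.prod_mul_distrib, Int.cast_mul, Int.cast_prod]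
  push_cast
  rw [← mul_assoc, inv_mul_cancel₀ hfac, one_mul]

/-- The evaluation matrix of binomial polynomials at the simplex points. -/
def M (r n : ℕ) : Matrix ↥(latticeSimplex r n) ↥(latticeSimplex r n) ℤ :=
  fun a b => ∏ i, ((a.1 i).choose (b.1 i) : ℤ)

lemma M_eq_zero {r n : ℕ} {a b : ↥(latticeSimplex r n)} (h : ¬ ∀ i, b.1 i ≤ a.1 i) :
    M r n a b = 0 := by
  push_neg at h
  obtain ⟨i, hi⟩ := h
  exact Finset.prod_eq_zero (Finset.mem_univ i) (by rw [Nat.choose_eq_zero_of_lt hi, Nat.cast_zero])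

lemma M_blockTriangular (r n : ℕ) :
    ((M r n)ᵀ).BlockTriangular (fun a => ∑ i, a.1 i) := by
  intro a b hlt
  apply M_eq_zero
  intro hle
  exact absurd (Finset.sum_le_sum fun i _ => hle i) (not_le.mpr hlt)

lemma M_det (r n : ℕ) : (M r n).det = 1 := by
  rw [← Matrix.det_transpose, (M_blockTriangular r n).det]
  apply Finset.prod_eq_one
  intro k _
  have h1 : ((M r n)ᵀ).toSquareBlock (fun a => ∑ i, a.1 i) k = 1 := by
    ext a b
    rw [Matrix.toSquareBlock_def]
    by_cases hab : a = b
    · subst hab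
      simp [Matrix.transpose_apply, M, Matrix.one_apply]
    · rw [Matrix.one_apply_ne hab]
      show M r n b.1 a.1 = 0
      apply M_eq_zero
      intro hle
      apply hab
      have hsum : ∑ i, a.1.1 i = ∑ i, b.1.1 i := by rw [a.2, b.2]
      have := (Finset.sum_eq_sum_iff_of_le (fun i _ => hle i)).mp hsum
      exact Subtype.ext (Subtype.ext (funext fun i => this i (Finset.mem_univ i)))
  rw [h1, Matrix.det_one]

/-- Inverse of the evaluation matrix, still integral. -/
noncomputable def N (r n : ℕ) : Matrix ↥(latticeSimplex r n) ↥(latticeSimplex r n) ℤ :=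
  (M r n)⁻¹

lemma N_mul_M (r n : ℕ) : N r n * M r n = 1 :=
  Matrix.nonsing_inv_mul _ (by rw [M_det]; exact isUnit_one)

/-- The integer binomial evaluation `∏ C(x_i, b_i)`. -/
def rho {r : ℕ} (x : Fin r → ℤ) (b : Fin r → ℕ) : ℤ := ∏ i, Ring.choose (x i) (b i)

/-- The interpolation coefficients. -/
noncomputable def c (r n : ℕ) (a : Fin r → ℕ) (x : Fin r → ℤ) : ℤ :=
  if h : a ∈ latticeSimplex r n then
    ∑ b : ↥(latticeSimplex r n), N r n b ⟨a, h⟩ * rho x b.1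
  else 0

lemma key_sum {r n : ℕ} (b : ↥(latticeSimplex r n)) (x : Fin r → ℤ) :
    ∑ a : ↥(latticeSimplex r n),
      (∑ b' : ↥(latticeSimplex r n), N r n b' a * rho x b'.1) * M r n a b = rho x b.1 := by
  have h1 : ∀ a : ↥(latticeSimplex r n),
      (∑ b' : ↥(latticeSimplex r n), N r n b' a * rho x b'.1) * M r n a b
      = ∑ b' : ↥(latticeSimplex r n), rho x b'.1 * (N r n b' a * M r n a b) := by
    intro a
    rw [Finset.sum_mul]
    exact Finset.sum_congr rfl fun b' _ => by ring
  rw [Finset.sum_congr rfl fun a _ => h1 a, Finset.sum_comm]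
  have h2 : ∀ b' : ↥(latticeSimplex r n),
      ∑ a : ↥(latticeSimplex r n), rho x b'.1 * (N r n b' a * M r n a b)
      = rho x b'.1 * (N r n * M r n) b' b := by
    intro b'
    rw [Matrix.mul_apply, Finset.mul_sum]
  rw [Finset.sum_congr rfl fun b' _ => h2 b', N_mul_M]
  simp [Matrix.one_apply]

/-- The basic interpolation identity for the binomial basis polynomials. -/
lemma gen_id {r n : ℕ} (b : ↥(latticeSimplex r n)) (x : Fin r → ℤ) :
    eval (fun i => (x i : ℚ)) (q r b.1) =
      ∑ a ∈ latticeSimplex r n,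
        (c r n a x : ℚ) * eval (fun i => ((a i : ℤ) : ℚ)) (q r b.1) := by
  rw [← Finset.sum_attach (latticeSimplex r n)
    (fun a => (c r n a x : ℚ) * eval (fun i => ((a i : ℤ) : ℚ)) (q r b.1))]
  have heval : ∀ a : ↥(latticeSimplex r n),
      eval (fun i => ((a.1 i : ℤ) : ℚ)) (q r b.1) = ((M r n a b : ℤ) : ℚ) := by
    intro a
    rw [eval_q b.1 (fun i => (a.1 i : ℤ))]
    congr 1
    rw [M]
    exact Finset.prod_congr rfl fun i _ => Ring.choose_natCast _ _
  have hc : ∀ a : ↥(latticeSimplex r n),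
      c r n a.1 x = ∑ b' : ↥(latticeSimplex r n), N r n b' a * rho x b'.1 := by
    intro a
    rw [c, dif_pos a.2]
  calc eval (fun i => (x i : ℚ)) (q r b.1) = ((rho x b.1 : ℤ) : ℚ) := eval_q b.1 x
  _ = ((∑ a : ↥(latticeSimplex r n),
        (∑ b' : ↥(latticeSimplex r n), N r n b' a * rho x b'.1) * M r n a b : ℤ) : ℚ) := by
      rw [key_sum]
  _ = _ := by
      rw [Int.cast_sum]
      refine Finset.sum_congr rfl fun a _ => ?_
      rw [heval a, hc a]
      push_cast
      ring

/-- The span of the binomial basis polynomials indexed by the simplex. -/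
noncomputable def V (r n : ℕ) : Submodule ℚ (MvPolynomial (Fin r) ℚ) :=
  Submodule.span ℚ (Set.range fun b : ↥(latticeSimplex r n) => q r b.1)

/-- "total degree strictly less than `m`, or zero". -/
def Dlt {r : ℕ} (m : ℕ) (g : MvPolynomial (Fin r) ℚ) : Prop := g = 0 ∨ g.totalDegree < m

variable {r : ℕ}

lemma Dlt.zero (m : ℕ) : Dlt m (0 : MvPolynomial (Fin r) ℚ) := Or.inl rfl

lemma Dlt.mono {m m' : ℕ} (h : m ≤ m') {g : MvPolynomial (Fin r) ℚ} (hg : Dlt m g) : Dlt m' g :=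
  hg.imp id fun h' => lt_of_lt_of_le h' h

lemma Dlt.add {m : ℕ} {g h : MvPolynomial (Fin r) ℚ} (hg : Dlt m g) (hh : Dlt m h) :
    Dlt m (g + h) := by
  rcases hg with rfl | hg
  · simpa using hh
  rcases hh with rfl | hh
  · rw [add_zero]; exact Or.inr hg
  exact Or.inr (lt_of_le_of_lt (totalDegree_add g h) (max_lt hg hh))

lemma Dlt.neg {m : ℕ} {g : MvPolynomial (Fin r) ℚ} (hg : Dlt m g) : Dlt m (-g) := by
  rcases hg with rfl | hg
  · exact Or.inl (neg_zero)
  · exact Or.inr (by rwa [totalDegree_neg])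

lemma Dlt.sub {m : ℕ} {g h : MvPolynomial (Fin r) ℚ} (hg : Dlt m g) (hh : Dlt m h) :
    Dlt m (g - h) := by rw [sub_eq_add_neg]; exact hg.add hh.neg

lemma Dlt.td {m : ℕ} {g : MvPolynomial (Fin r) ℚ} (hg : Dlt m g) : g.totalDegree ≤ m := by
  rcases hg with rfl | hg
  · simp
  · exact hg.le

lemma Dlt.of_le {m : ℕ} {g : MvPolynomial (Fin r) ℚ} (hg : g.totalDegree ≤ m) : Dlt (m + 1) g :=
  Or.inr (Nat.lt_succ_of_le hg)

lemma Dlt.mul {m t : ℕ} {g h : MvPolynomial (Fin r) ℚ} (hg : Dlt m g)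
    (hh : h.totalDegree ≤ t) : Dlt (m + t) (g * h) := by
  rcases hg with rfl | hg
  · exact Or.inl (zero_mul h)
  · exact Or.inr (lt_of_le_of_lt (totalDegree_mul g h) (by omega))

lemma Dlt.mul' {m t : ℕ} {g h : MvPolynomial (Fin r) ℚ} (hg : g.totalDegree ≤ m)
    (hh : Dlt t h) : Dlt (m + t) (g * h) := by
  rw [mul_comm]; rw [Nat.add_comm]; exact hh.mul hg

lemma P_decomp (i : Fin r) (k : ℕ) :
    ∃ u, P r i k = X i ^ k + u ∧ Dlt k u := by
  induction k with
  | zero => exact ⟨0, by simp [P], Dlt.zero 0⟩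
  | succ k ih =>
    obtain ⟨u, hu, hd⟩ := ih
    refine ⟨u * X i - C (k : ℚ) * X i ^ k - C (k : ℚ) * u, ?_, ?_⟩
    · rw [P, Finset.prod_range_succ, ← P, hu]; ring
    · have h1 : Dlt (k + 1) (u * X i) := by
        have := hd.mul (t := 1) (h := X i) (totalDegree_X i).le
        exact this
      have h2 : Dlt (k + 1) (C (k : ℚ) * X i ^ k) := by
        apply Dlt.of_le
        calc (C (k : ℚ) * X i ^ k).totalDegree ≤ _ := totalDegree_mul _ _
        _ ≤ 0 + k := by
            exact Nat.add_le_add (totalDegree_C _).le (totalDegree_X_pow _ _).le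
        _ = k := by omega
      have h3 : Dlt (k + 1) (C (k : ℚ) * u) := by
        have := Dlt.mul' (m := 0) (g := C (k : ℚ)) (totalDegree_C _).le (hd.mono (Nat.le_succ k))
        simpa using this
      exact (h1.sub h2).sub h3

lemma prod_decomp (d : Fin r → ℕ) (s : Finset (Fin r)) :
    ∃ v, ∏ i ∈ s, P r i (d i) = (∏ i ∈ s, X i ^ d i) + v ∧ Dlt (∑ i ∈ s, d i) v := by
  induction s using Finset.induction with
  | empty => exact ⟨0, by simp, Dlt.zero 0⟩
  | insert _ _ hi ih =>
    rename_i i s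
    obtain ⟨v, hv, hdv⟩ := ih
    obtain ⟨u, hu, hdu⟩ := P_decomp i (d i)
    refine ⟨X i ^ d i * v + u * ∏ j ∈ s, X j ^ d j + u * v, ?_, ?_⟩
    · rw [Finset.prod_insert hi, Finset.prod_insert hi, hv, hu]; ring
    · rw [Finset.sum_insert hi]
      have hXpow : (X (R := ℚ) i ^ d i).totalDegree ≤ d i := (totalDegree_X_pow _ _).le
      have hprodX : (∏ j ∈ s, X (R := ℚ) j ^ d j).totalDegree ≤ ∑ j ∈ s, d j := by
        calc _ ≤ ∑ j ∈ s, (X (R := ℚ) j ^ d j).totalDegree := totalDegree_finset_prod s _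
        _ ≤ ∑ j ∈ s, d j := Finset.sum_le_sum fun j _ => (totalDegree_X_pow _ _).le
      have h1 : Dlt (d i + ∑ j ∈ s, d j) (X i ^ d i * v) := Dlt.mul' hXpow hdv
      have h2 : Dlt (d i + ∑ j ∈ s, d j) (u * ∏ j ∈ s, X j ^ d j) := hdu.mul hprodX
      have h3 : Dlt (d i + ∑ j ∈ s, d j) (u * v) := hdu.mul hdv.td
      exact (h1.add h2).add h3

lemma prodP_mem_V {n : ℕ} (e : Fin r → ℕ) (h : ∑ i, e i ≤ n) :
    (∏ i, P r i (e i)) ∈ V r n := by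
  have hfac : (∏ i, ((e i).factorial : ℚ)) ≠ 0 :=
    Finset.prod_ne_zero_iff.mpr fun i _ => by exact_mod_cast (Nat.factorial_ne_zero _)
  have heq : (∏ i, P r i (e i)) = (∏ i, ((e i).factorial : ℚ)) • q r e := by
    rw [q, smul_eq_C_mul, ← mul_assoc, ← C_mul, mul_inv_cancel₀ hfac, C_1, one_mul]
  rw [heq]
  exact Submodule.smul_mem _ _
    (Submodule.subset_span ⟨⟨e, mem_latticeSimplex h⟩, rfl⟩)

lemma mem_V_of_totalDegree_le {n : ℕ} (m : ℕ) :
    ∀ f : MvPolynomial (Fin r) ℚ, f.totalDegree ≤ m → m ≤ n → f ∈ V r n := by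
  induction m using Nat.strong_induction_on with
  | _ m ih =>
    intro f hf hmn
    rw [f.as_sum]
    apply Submodule.sum_mem
    intro e he
    have hsum : ∑ i, e i ≤ m := by
      refine le_trans ?_ (le_trans (le_totalDegree he) hf)
      rw [Finsupp.sum_fintype]
      intro; rfl
    rw [show (monomial e) (coeff e f) = (coeff e f) • (monomial e (1 : ℚ)) by
      rw [smul_monomial, smul_eq_mul, mul_one]]
    apply Submodule.smul_mem
    obtain ⟨v, hv, hdv⟩ := prod_decomp (fun i => e i) Finset.univ
    have hmono : (∏ i, X i ^ e i : MvPolynomial (Fin r) ℚ) = monomial e 1 := by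
      rw [monomial_eq, C_1, one_mul, Finsupp.prod_fintype]
      intro; exact pow_zero _
    have hF : (∏ i, P r i (e i)) ∈ V r n := prodP_mem_V e (le_trans hsum hmn)
    have hvV : v ∈ V r n := by
      rcases hdv with rfl | hdv
      · exact Submodule.zero_mem _
      · exact ih v.totalDegree (lt_of_lt_of_le hdv hsum) v le_rfl
          (le_trans (le_of_lt (lt_of_lt_of_le hdv hsum)) hmn)
    have hrepr : (monomial e (1:ℚ)) = (∏ i, P r i (e i)) - v := by
      rw [hv, hmono]; ring
    rw [hrepr]
    exact Submodule.sub_mem _ hF hvV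

end LatticePoised

/-- **The lattice simplex is integrally-poised for polynomials of degree `n`.**
There is a family of integer-valued polynomial functions `c_a : ℤ^r → ℤ`, indexed by
the multi-indices `a ∈ ℕ^r` with `Σ a_i ≤ n`, such that every polynomial
`f ∈ ℚ[x_1,…,x_r]` of total degree at most `n` with integer values on `ℤ^r` satisfies
`f(x) = Σ_{a ∈ S_n} c_a(x) · f(a)` for all `x ∈ ℤ^r`. -/
theorem latticeSimplex_integrally_poised (r n : ℕ) :
    ∃ c : (Fin r → ℕ) → (Fin r → ℤ) → ℤ,
      (∀ a ∈ latticeSimplex r n, ∃ p : MvPolynomial (Fin r) ℚ,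
        ∀ x : Fin r → ℤ, (c a x : ℚ) = MvPolynomial.eval (fun i => (x i : ℚ)) p) ∧
      (∀ f : MvPolynomial (Fin r) ℚ, f.totalDegree ≤ n →
        (∀ x : Fin r → ℤ, ∃ m : ℤ, MvPolynomial.eval (fun i => (x i : ℚ)) f = m) →
        ∀ x : Fin r → ℤ,
          MvPolynomial.eval (fun i => (x i : ℚ)) f =
            ∑ a ∈ latticeSimplex r n,
              (c a x : ℚ) * MvPolynomial.eval (fun i => ((a i : ℤ) : ℚ)) f) := by
  classical
  open MvPolynomial LatticePoised in
  refine ⟨LatticePoised.c r n, ?_, ?_⟩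
  · intro a ha
    refine ⟨∑ b : ↥(latticeSimplex r n),
      C ((LatticePoised.N r n b ⟨a, ha⟩ : ℤ) : ℚ) * LatticePoised.q r b.1, ?_⟩
    intro x
    rw [map_sum]
    rw [LatticePoised.c, dif_pos ha, Int.cast_sum]
    refine Finset.sum_congr rfl fun b _ => ?_
    rw [eval_mul, eval_C, LatticePoised.eval_q]
    push_cast [LatticePoised.rho]
    ring
  · intro f hdeg _ x
    have hfV : f ∈ LatticePoised.V r n :=
      LatticePoised.mem_V_of_totalDegree_le n f hdeg le_rfl
    refine Submodule.span_induction
      (p := fun g _ => ∀ y : Fin r → ℤ,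
        eval (fun i => (y i : ℚ)) g =
          ∑ a ∈ latticeSimplex r n,
            ((LatticePoised.c r n a y : ℤ) : ℚ) * eval (fun i => ((a i : ℤ) : ℚ)) g)
      ?_ ?_ ?_ ?_ hfV x
    · rintro g ⟨b, rfl⟩ y
      exact LatticePoised.gen_id b y
    · intro y; simp
    · intro g h _ _ hg hh y
      simp only [map_add, hg y, hh y, mul_add, Finset.sum_add_distrib]
    · intro t g _ hg y
      rw [smul_eq_C_mul, eval_mul, eval_C, hg y, Finset.mul_sum]
      refine Finset.sum_congr rfl fun a _ => ?_
      rw [eval_mul, eval_C]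
      ring
end

section
/- Let S ⊆ ℤ^r be a finite set that is integrally poised for polynomials of degree n+1, i.e., there exist functions c_a : ℤ^r → ℤ (a ∈ S) such that f(x) = Σ_{a ∈ S} c_a(x) f(a) for every polynomial f ∈ ℚ[x₁,…,x_r] of total degree at most n+1 with f(ℤ^r) ⊆ ℤ and every x ∈ ℤ^r. If g ∈ ℚ[x₁,…,x_r] is a polynomial of total degree at most n with g(ℤ^r) ⊆ ℤ, then the subgroup of ℤ^r generated by { g(x)·x : x ∈ ℤ^r } is equal to the subgroup of ℤ^r generated by { g(x)·x : x ∈ S }. -/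
/-!
Multiplying `g` by a coordinate raises its degree by one, so `x ↦ xᵢ g(x)` is an integer-valued
polynomial of degree at most `n + 1`. Poisedness therefore writes `g(x) xᵢ` as
`∑ₐ cₐ(x) g(a) aᵢ` for every coordinate `i`, i.e. `g(x)·x` is an integral combination of the
generators `g(a)·a` with `a ∈ S`.
-/

open Finset

theorem AddSubgroup.closure_range_eq_closure_image_of_eq_sum {α M : Type*} [AddCommGroup M]
    (f : α → M) (S : Finset α) (c : α → α → ℤ) (h : ∀ x, f x = ∑ a ∈ S, c a x • f a) :
    closure (Set.range f) = closure (f '' S) := by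
  refine le_antisymm ?_ (closure_mono (Set.image_subset_range f S))
  rw [closure_le]
  rintro _ ⟨x, rfl⟩
  rw [h x]
  exact sum_mem fun a ha => zsmul_mem (subset_closure (Set.mem_image_of_mem f ha)) _

namespace MvPolynomial

theorem totalDegree_X_mul_le {σ R : Type*} [CommSemiring R] [Nontrivial R] (i : σ)
    (p : MvPolynomial σ R) : (X i * p).totalDegree ≤ p.totalDegree + 1 :=
  (totalDegree_mul _ _).trans <| by rw [totalDegree_X, add_comm]

theorem zsmul_self_eq_sum_of_poised {σ : Type*} (n : ℕ) (S : Finset (σ → ℤ))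
    (c : (σ → ℤ) → (σ → ℤ) → ℤ)
    (hpoised : ∀ f : MvPolynomial σ ℚ, f.totalDegree ≤ n + 1 →
      (∀ x : σ → ℤ, ∃ m : ℤ, eval (fun i => (x i : ℚ)) f = m) →
      ∀ x : σ → ℤ, eval (fun i => (x i : ℚ)) f = ∑ a ∈ S, (c a x : ℚ) * eval (fun i => (a i : ℚ)) f)
    (g : MvPolynomial σ ℚ) (hgdeg : g.totalDegree ≤ n) (gval : (σ → ℤ) → ℤ)
    (hgval : ∀ x : σ → ℤ, (gval x : ℚ) = eval (fun i => (x i : ℚ)) g) (x : σ → ℤ) :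
    gval x • x = ∑ a ∈ S, c a x • gval a • a := by
  funext i
  have hdeg : (X i * g).totalDegree ≤ n + 1 := (totalDegree_X_mul_le i g).trans (by omega)
  have hint (y : σ → ℤ) : ∃ m : ℤ, eval (fun j => (y j : ℚ)) (X i * g) = m :=
    ⟨y i * gval y, by simp [hgval]⟩
  have key := hpoised _ hdeg hint x
  simp only [map_mul, eval_X, ← hgval] at key
  simp only [Finset.sum_apply, Pi.smul_apply, smul_eq_mul]
  qify
  rw [mul_comm, key]
  exact sum_congr rfl fun a _ => by ring

end MvPolynomial

/-- **Proposition (poised sets and generating sets).**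
Suppose `S ⊆ ℤ^r` is a finite set that is integrally poised for polynomials of degree
`n+1`, witnessed by the family `c_a : ℤ^r → ℤ` (`a ∈ S`).  If `g` is a polynomial of
total degree at most `n` taking integer values on `ℤ^r` (with integer value function
`gval`), then the subgroup of `ℤ^r` generated by `{ g(x)·x : x ∈ ℤ^r }` equals the
subgroup generated by `{ g(x)·x : x ∈ S }`. -/
theorem poised_generators (r n : ℕ) (S : Finset (Fin r → ℤ))
    (c : (Fin r → ℤ) → (Fin r → ℤ) → ℤ)
    (hpoised : ∀ f : MvPolynomial (Fin r) ℚ, f.totalDegree ≤ n + 1 →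
      (∀ x : Fin r → ℤ, ∃ m : ℤ, MvPolynomial.eval (fun i => (x i : ℚ)) f = m) →
      ∀ x : Fin r → ℤ,
        MvPolynomial.eval (fun i => (x i : ℚ)) f =
          ∑ a ∈ S, (c a x : ℚ) * MvPolynomial.eval (fun i => (a i : ℚ)) f)
    (g : MvPolynomial (Fin r) ℚ) (hgdeg : g.totalDegree ≤ n)
    (gval : (Fin r → ℤ) → ℤ)
    (hgval : ∀ x : Fin r → ℤ, (gval x : ℚ) = MvPolynomial.eval (fun i => (x i : ℚ)) g) :
    AddSubgroup.closure {v : Fin r → ℤ | ∃ x : Fin r → ℤ, v = gval x • x} =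
      AddSubgroup.closure {v : Fin r → ℤ | ∃ x ∈ S, v = gval x • x} := by
  convert AddSubgroup.closure_range_eq_closure_image_of_eq_sum (fun x => gval x • x) S c
    (MvPolynomial.zsmul_self_eq_sum_of_poised n S c hpoised g hgdeg gval hgval) using 2 <;>
  ext <;> simp [eq_comm]
end

section
/- Let n be a natural number, a₀, …, a_n integers, and define f : ℤ → ℤ by f(k) = Σ_{i=0}^n a_i · C(k,i). For an integer m, the following are equivalent: (1) m divides k·f(k) for every integer k (equivalently, m divides gcd{ k·f(k) : k ∈ ℤ }); (2) m divides k·(a_k + a_{k−1}) for every k with 1 ≤ k ≤ n, and m divides (n+1)·a_n. -/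
/-!
Multiplication by `k` acts on the binomial basis by `k·C(k,i) = (i+1)·C(k,i+1) + i·C(k,i)`, so
`k·f(k)` has binomial coordinates `j·(a_j + a_{j-1})` for `j ≤ n` and `(n+1)·a_n` for `j = n+1`.
A binomial combination takes values divisible by `m` everywhere iff all its coordinates are
divisible by `m`: evaluating at `k = 0, 1, 2, …` gives a unitriangular system.
-/

open Finset

namespace Ring

variable {R : Type*} [CommRing R] [BinomialRing R]

theorem self_mul_choose (r : R) (i : ℕ) :
    r * choose r i = (i + 1) * choose r (i + 1) + i * choose r i := by
  have h := choose_smul_choose r (Nat.le_succ i)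
  rw [Nat.choose_succ_self_right, Nat.succ_eq_add_one, Nat.add_sub_cancel_left, choose_one_right,
    nsmul_eq_mul] at h
  push_cast at h
  linear_combination -h

theorem self_mul_sum_mul_choose (r : R) (a : ℕ → R) (n : ℕ) :
    r * ∑ i ∈ range (n + 1), a i * choose r i =
      ∑ j ∈ range (n + 1), j * (a j + a (j - 1)) * choose r j +
        (n + 1) * a n * choose r (n + 1) := by
  induction n with
  | zero => simp [mul_comm]
  | succ n ih =>
    rw [sum_range_succ, mul_add, ih, sum_range_succ _ (n + 1), mul_left_comm, self_mul_choose]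
    push_cast
    ring

theorem forall_dvd_sum_mul_choose_iff (m : R) (b : ℕ → R) (N : ℕ) :
    (∀ r : R, m ∣ ∑ j ∈ range N, b j * choose r j) ↔ ∀ j < N, m ∣ b j := by
  refine ⟨fun h j => ?_, fun h r => dvd_sum fun j hj => (h j (mem_range.mp hj)).mul_right _⟩
  induction j using Nat.strong_induction_on with
  | _ j ih =>
    intro hj
    have hsum : ∑ i ∈ range N, b i * choose (j : R) i =
        ∑ i ∈ range j, b i * (j.choose i : R) + b j := by
      rw [← sum_subset (range_subset_range.mpr hj) fun i _ hi => ?_, sum_range_succ]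
      · simp only [choose_natCast, Nat.choose_self, Nat.cast_one, mul_one]
      · rw [choose_natCast, Nat.choose_eq_zero_of_lt (by simpa using hi), Nat.cast_zero, mul_zero]
    have hlower : m ∣ ∑ i ∈ range j, b i * (j.choose i : R) :=
      dvd_sum fun i hi => (ih i (mem_range.mp hi) ((mem_range.mp hi).trans hj)).mul_right _
    exact (dvd_add_right hlower).mp (hsum ▸ h j)

end Ring

/-- **Corollary (congruence conditions for dividing all `k·f(k)`).**
If `f(k) = Σ_{i=0}^n a_i · C(k,i)` with integers `a_i`, then an integer `m` divides
`k·f(k)` for every integer `k` if and only if `m` divides `k·(a_k + a_{k−1})` for all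
`1 ≤ k ≤ n` and `m` divides `(n+1)·a_n`. -/
theorem dvd_mul_self_iff_congruences (n : ℕ) (a : ℕ → ℤ) (f : ℤ → ℤ)
    (hf : ∀ k : ℤ, f k = ∑ i ∈ Finset.range (n + 1), a i * Ring.choose k i)
    (m : ℤ) :
    (∀ k : ℤ, m ∣ k * f k) ↔
      ((∀ k ∈ Finset.Icc 1 n, m ∣ (k : ℤ) * (a k + a (k - 1))) ∧
        m ∣ (n + 1 : ℤ) * a n) := by
  set b : ℕ → ℤ := fun j => if j ≤ n then j * (a j + a (j - 1)) else (n + 1) * a n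
  have hkf (k : ℤ) : k * f k = ∑ j ∈ range (n + 2), b j * Ring.choose k j := by
    rw [hf, Ring.self_mul_sum_mul_choose, sum_range_succ _ (n + 1)]
    congr 1
    · exact sum_congr rfl fun j hj => by simp [b, Nat.lt_succ_iff.mp (mem_range.mp hj)]
    · simp [b]
  simp_rw [hkf, Ring.forall_dvd_sum_mul_choose_iff]
  rw [Nat.forall_lt_succ_right]
  refine and_congr ⟨fun h k hk => ?_, fun h j hj => ?_⟩ (by simp [b])
  · simpa [b, (mem_Icc.mp hk).2] using h k (by grind)
  · rcases j with _ | j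
    · simp [b]
    · simpa [b, Nat.lt_succ_iff.mp hj] using h (j + 1) (by grind)
end

section
/- Let n be a natural number, a₀, …, a_n integers, and define f : ℤ → ℤ by f(k) = Σ_{i=0}^n a_i · C(k,i). Then gcd{ k·f(k) : k ∈ ℤ } divides gcd{ f(k) : k ∈ ℤ } · lcm{1, 2, …, n+1}; equivalently, the integer gcd(a₀,…,a_n) · lcm{1,…,n+1} lies in the subgroup of ℤ generated by { k·f(k) : k ∈ ℤ }. -/
/-!
Write `k * f k = ∑ j, b j * C(k, j)` with `b j = j * (a j + a (j - 1))`. Newton's forward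
differences express each `b j` as an integer combination of the values `m * f m`, `m ≤ j`, so every
`b j` lies in the subgroup `H` they generate. As `j ∣ L := lcm{1, …, n + 1}`, descending induction
via `L * a (j - 1) = (L / j) * b j - L * a j`, starting from `a (n + 1) = 0`, puts every `L * a i`
in `H`, and Bézout then gives `L * gcd(a 0, …, a n) ∈ H`.
-/

open Finset

namespace Ring

variable {R : Type*} [CommRing R] [BinomialRing R]

theorem mul_choose_eq (r : R) (i : ℕ) :
    r * choose r i = i * choose r i + (i + 1) * choose r (i + 1) := by
  have h := choose_smul_choose r (Nat.le_add_right i 1)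
  rw [Nat.choose_succ_self_right, Nat.add_sub_cancel_left, choose_one_right, nsmul_eq_mul] at h
  push_cast at h
  linear_combination -h

/-- At `j = 0` the truncated `j - 1` is harmless: the term carries the factor `j`. -/
theorem mul_sum_mul_choose {N : ℕ} {c : ℕ → R} (hc : c N = 0) (r : R) :
    r * ∑ i ∈ range N, c i * choose r i =
      ∑ j ∈ range (N + 1), (j : R) * (c j + c (j - 1)) * choose r j := by
  calc r * ∑ i ∈ range N, c i * choose r i
      = ∑ i ∈ range N, (i : R) * c i * choose r i
          + ∑ i ∈ range N, ((i + 1 : ℕ) : R) * c i * choose r (i + 1) := by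
        rw [mul_sum, ← sum_add_distrib]
        refine sum_congr rfl fun i _ => ?_
        push_cast
        linear_combination c i * mul_choose_eq r i
    _ = ∑ j ∈ range (N + 1), (j : R) * (c j + c (j - 1)) * choose r j := by
        simp only [mul_add, add_mul, sum_add_distrib]
        rw [sum_range_succ, hc, sum_range_succ' _ N]
        simp

end Ring

theorem AddSubgroup.mem_of_forall_sum_choose_nsmul_mem {M : Type*} [AddCommGroup M]
    {H : AddSubgroup M} {N : ℕ} {b : ℕ → M}
    (hb : ∀ m : ℕ, ∑ j ∈ range N, m.choose j • b j ∈ H) {j : ℕ} (hj : j < N) : b j ∈ H := by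
  induction j using Nat.strong_induction_on with
  | _ j ih =>
  have hsum : ∑ i ∈ range N, j.choose i • b i = b j + ∑ i ∈ range j, j.choose i • b i := by
    rw [← sum_subset (range_subset_range.2 hj) fun i _ hi => ?_, sum_range_succ, Nat.choose_self,
      one_smul, add_comm]
    rw [Nat.choose_eq_zero_of_lt (by simpa using hi), zero_smul]
  have hval := hb j
  rw [hsum] at hval
  have hrest : ∑ i ∈ range j, j.choose i • b i ∈ H :=
    sum_mem fun i hi => nsmul_mem (ih i (mem_range.1 hi) ((mem_range.1 hi).trans hj)) _
  simpa using sub_mem hval hrest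

theorem AddSubgroup.mul_mem_of_succ_mul_add_mem {H : AddSubgroup ℤ} {N : ℕ} {c : ℕ → ℤ} {L : ℤ}
    (hc : ∀ i, N ≤ i → c i = 0) (hL : ∀ i < N, (i + 1 : ℤ) ∣ L)
    (hH : ∀ i < N, (i + 1 : ℤ) * (c (i + 1) + c i) ∈ H) (i : ℕ) : L * c i ∈ H := by
  induction i using Nat.strong_decreasing_induction with
  | base => exact ⟨N, fun m hm => by simp [hc m hm.le]⟩
  | step i ih =>
    rcases le_or_gt N i with hi | hi
    · simp [hc i hi]
    obtain ⟨q, hq⟩ := hL i hi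
    have hsplit : L * c i = q * ((i + 1) * (c (i + 1) + c i)) - L * c (i + 1) := by
      rw [hq]; ring
    rw [hsplit]
    exact sub_mem (by simpa using zsmul_mem (hH i hi) q) (ih (i + 1) (by omega))

theorem Finset.gcd_mem_of_forall_mem {ι : Type*} {H : AddSubgroup ℤ} {s : Finset ι} {f : ι → ℤ}
    (h : ∀ i ∈ s, f i ∈ H) : s.gcd f ∈ H := by
  obtain ⟨g, hg⟩ := s.gcd_eq_sum_mul f
  rw [hg]
  exact sum_mem fun i hi => by simpa [mul_comm] using zsmul_mem (h i hi) (g i)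

/-- **Lemma (Chebyshev-type bound).**
If `f(k) = Σ_{i=0}^n a_i · C(k,i)` with integers `a_i`, then
`gcd{ k·f(k) : k ∈ ℤ }` divides `gcd{ f(k) : k ∈ ℤ } · lcm{1,…,n+1}`; equivalently
(since `gcd{ f(k) } = gcd(a_0,…,a_n)`), the integer `gcd(a_0,…,a_n) · lcm{1,…,n+1}`
lies in the subgroup of `ℤ` generated by `{ k·f(k) : k ∈ ℤ }`. -/
theorem gcd_mul_self_dvd_gcd_mul_lcm (n : ℕ) (a : ℕ → ℤ) (f : ℤ → ℤ)
    (hf : ∀ k : ℤ, f k = ∑ i ∈ Finset.range (n + 1), a i * Ring.choose k i) :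
    (Finset.range (n + 1)).gcd a * (Finset.Icc (1 : ℤ) (n + 1)).lcm id ∈
      AddSubgroup.closure {x : ℤ | ∃ k : ℤ, x = k * f k} := by
  set H := AddSubgroup.closure {x : ℤ | ∃ k : ℤ, x = k * f k}
  set L := (Icc (1 : ℤ) (n + 1)).lcm id
  set c : ℕ → ℤ := fun i => if i ≤ n then a i else 0
  have hc : ∀ i, n + 1 ≤ i → c i = 0 := fun i hi => if_neg (by omega)
  have hfc (k : ℤ) :
      k * f k = ∑ j ∈ range (n + 2), (j : ℤ) * (c j + c (j - 1)) * Ring.choose k j := by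
    rw [hf, ← Ring.mul_sum_mul_choose (hc _ le_rfl)]
    congr 1
    exact sum_congr rfl fun i hi => by simp only [c, if_pos (Nat.lt_succ_iff.1 (mem_range.1 hi))]
  have hcoeff : ∀ i < n + 1, (i + 1 : ℤ) * (c (i + 1) + c i) ∈ H := by
    have hval (m : ℕ) : ∑ j ∈ range (n + 2), m.choose j • ((j : ℤ) * (c j + c (j - 1))) ∈ H := by
      simpa [hfc, Ring.choose_natCast, mul_comm] using
        (show (m : ℤ) * f m ∈ H from AddSubgroup.subset_closure ⟨(m : ℤ), rfl⟩)
    intro i hi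
    simpa using AddSubgroup.mem_of_forall_sum_choose_nsmul_mem hval (j := i + 1) (by omega)
  have hL : ∀ i < n + 1, (i + 1 : ℤ) ∣ L := fun i hi =>
    dvd_lcm (f := id) (mem_Icc.2 ⟨by omega, by omega⟩)
  have hLc := AddSubgroup.mul_mem_of_succ_mul_add_mem hc hL hcoeff
  have hgcd : (range (n + 1)).gcd (fun i => L * a i) ∈ H :=
    gcd_mem_of_forall_mem fun i hi => by simpa [c, Nat.lt_succ_iff.1 (mem_range.1 hi)] using hLc i
  rwa [Finset.gcd_mul_left, Finset.normalize_lcm, mul_comm] at hgcd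
end

section
/- Let f ∈ ℚ[x] be a univariate polynomial of degree at most n with f(k) ∈ ℤ for all k ∈ ℤ. Then gcd{ k·f(k) : k ∈ ℤ } divides f(0) · lcm{1, 2, …, n+1}; equivalently, the integer f(0)·lcm{1,…,n+1} lies in the subgroup of ℤ generated by { k·f(k) : k ∈ ℤ }. (This is the numerical content of the uniform bound on the exponent of the Amitsur group: for a smooth projective G-variety X of dimension n with Hilbert polynomial f(k)=χ(kD), one has f(0)=1+(−1)ⁿ p_a.) -/
/-!
Put `g k = k • f k`. A discrete Leibniz rule gives `Δ^[i+1] g 0 = (i+1) • Δ^[i] f 1`, and since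
`Δ^[n+1] f` vanishes, `f 0 = ∑_{i ≤ n} (-1)^i • Δ^[i] f 1`. Multiplying by
`L = lcm{1, …, n+1}` turns each term into an integer multiple of `Δ^[i+1] g 0`, which is an
integer combination of values of `g`.
-/

open Finset fwdDiff

section

variable {M G : Type*} [AddCommMonoid M] [AddCommGroup G]

theorem fwdDiff_iter_succ_apply (h : M) (F : M → G) (n : ℕ) (y : M) :
    Δ_[h] ^[n + 1] F y = Δ_[h] ^[n] F (y + h) - Δ_[h] ^[n] F y := by
  rw [Function.iterate_succ_apply']; rfl

theorem fwdDiff_iter_mem_closure_range (h : M) (F : M → G) (n : ℕ) (y : M) :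
    Δ_[h] ^[n] F y ∈ AddSubgroup.closure (Set.range F) := by
  rw [fwdDiff_iter_eq_sum_shift]
  exact sum_mem fun k _ ↦ zsmul_mem (AddSubgroup.subset_closure (Set.mem_range_self _)) _

theorem fwdDiff_iter_addMonoidHom_comp {G' : Type*} [AddCommGroup G'] (φ : G →+ G')
    (h : M) (F : M → G) (n : ℕ) : Δ_[h] ^[n] (φ ∘ F) = φ ∘ Δ_[h] ^[n] F := by
  ext y
  simp [fwdDiff_iter_eq_sum_shift, map_sum, map_zsmul]

theorem fwdDiff_iter_comp_addMonoidHom {M' : Type*} [AddCommMonoid M'] (ψ : M →+ M')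
    (h : M) (F : M' → G) (n : ℕ) (y : M) :
    Δ_[h] ^[n] (F ∘ ψ) y = Δ_[ψ h] ^[n] F (ψ y) := by
  simp [fwdDiff_iter_eq_sum_shift, map_nsmul]

end

section

variable {M G : Type*} [AddCommGroup M] [AddCommGroup G]

theorem eq_sum_fwdDiff_iter_add (h : M) (F : M → G) (n : ℕ) (y : M) :
    F y = ∑ i ∈ range (n + 1), (-1 : ℤ) ^ i • Δ_[h] ^[i] F (y + h)
      + (-1 : ℤ) ^ (n + 1) • Δ_[h] ^[n + 1] F y := by
  induction n with
  | zero => simp [fwdDiff]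
  | succ n ih =>
    rw [sum_range_succ, fwdDiff_iter_succ_apply h F (n + 1), ih]
    module

end

section

variable {G : Type*} [AddCommGroup G]

theorem fwdDiff_iter_succ_id_smul (F : ℤ → G) (n : ℕ) (m : ℤ) :
    Δ_[1] ^[n + 1] (fun k ↦ k • F k) m
      = ((n : ℤ) + 1) • Δ_[1] ^[n] F (m + 1) + m • Δ_[1] ^[n + 1] F m := by
  induction n generalizing m with
  | zero =>
    simp only [zero_add, Function.iterate_one, Function.iterate_zero_apply, fwdDiff]
    module
  | succ n ih =>
    rw [fwdDiff_iter_succ_apply, ih, ih, fwdDiff_iter_succ_apply 1 F (n + 1),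
      fwdDiff_iter_succ_apply 1 F n (m + 1)]
    push_cast
    module

theorem lcm_smul_mem_closure_range_id_smul {n : ℕ} {F : ℤ → G}
    (hF : Δ_[1] ^[n + 1] F 0 = 0) :
    (Icc (1 : ℤ) (n + 1)).lcm id • F 0 ∈ AddSubgroup.closure (Set.range fun k ↦ k • F k) := by
  rw [eq_sum_fwdDiff_iter_add 1 F n 0, hF, smul_zero, add_zero, zero_add, smul_sum]
  refine sum_mem fun i hi ↦ ?_
  obtain ⟨c, hc⟩ : (i : ℤ) + 1 ∣ (Icc (1 : ℤ) (n + 1)).lcm id :=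
    dvd_lcm (by simp at hi ⊢; omega)
  have hmem := fwdDiff_iter_mem_closure_range 1 (fun k ↦ k • F k) (i + 1) 0
  rw [fwdDiff_iter_succ_id_smul, zero_smul, add_zero] at hmem
  rw [hc, smul_comm, mul_comm, mul_smul]
  exact zsmul_mem (zsmul_mem hmem c) _

end

/-- **Uniform bound (numerical form).**
Let `f ∈ ℚ[x]` be a polynomial of degree at most `n` taking integer values on `ℤ`
(with integer value function `fI`).  Then `gcd{ k·f(k) : k ∈ ℤ }` divides
`f(0) · lcm{1,…,n+1}`; equivalently, the integer `f(0) · lcm{1,…,n+1}` lies in the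
subgroup of `ℤ` generated by `{ k·f(k) : k ∈ ℤ }`. -/
theorem uniform_bound_numerical (n : ℕ) (f : Polynomial ℚ)
    (hdeg : f.natDegree ≤ n)
    (fI : ℤ → ℤ) (hfI : ∀ k : ℤ, (fI k : ℚ) = f.eval (k : ℚ)) :
    fI 0 * (Finset.Icc (1 : ℤ) (n + 1)).lcm id ∈
      AddSubgroup.closure {x : ℤ | ∃ k : ℤ, x = k * fI k} := by
  have hvanish : Δ_[1] ^[n + 1] fI 0 = 0 := by
    have hcomp : Int.castAddHom ℚ ∘ fI = f.eval ∘ Int.castAddHom ℚ := funext hfI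
    have := congrFun (fwdDiff_iter_addMonoidHom_comp (Int.castAddHom ℚ) 1 fI (n + 1)) 0
    rw [hcomp, fwdDiff_iter_comp_addMonoidHom] at this
    simpa [f.fwdDiff_iter_eq_zero_of_degree_lt (Nat.lt_succ_of_le hdeg)] using this.symm
  have hS : {x : ℤ | ∃ k : ℤ, x = k * fI k} = Set.range fun k ↦ k • fI k := by
    ext; simp [eq_comm]
  rw [hS, mul_comm, ← smul_eq_mul]
  exact lcm_smul_mem_closure_range_id_smul hvanish
end

section
/- Let c and d be integers and define f : ℤ → ℤ by f(k) = d·k + c. Then gcd{ k·f(k) : k ∈ ℤ } = gcd(d + c, 2d); equivalently, the subgroup of ℤ generated by { k·(d·k + c) : k ∈ ℤ } equals the subgroup generated by { d + c, 2d }. (In the geometric setting, f(k) = χ(kD) = deg(D)·k + (1 − p_a) for a divisor D on a smooth curve of genus p_a, by Riemann–Roch.) -/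
/-!
Since `k (k - 1)` is even, `k (d k + c) = k (d + c) + (k (k - 1) / 2) (2 d)`, so every value lies in
the subgroup generated by `d + c` and `2 d`. Conversely `d + c` is the value at `k = 1`, and
`2 d = 2 (2 d + c) - 2 (d + c)` combines the values at `k = 2` and `k = 1`.
-/

namespace Int

lemma exists_mul_mul_add_eq (c d k : ℤ) : ∃ m : ℤ, k * (d * k + c) = k * (d + c) + m * (2 * d) := by
  obtain ⟨m, hm⟩ := even_mul_pred_self k
  exact ⟨m, by linear_combination d * hm⟩

lemma mul_mul_add_mem_closure (c d k : ℤ) :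
    k * (d * k + c) ∈ AddSubgroup.closure {d + c, 2 * d} := by
  obtain ⟨m, hm⟩ := exists_mul_mul_add_eq c d k
  rw [hm]
  exact add_mem (AddSubgroup.int_mul_mem k (AddSubgroup.subset_closure (by simp)))
    (AddSubgroup.int_mul_mem m (AddSubgroup.subset_closure (by simp)))

end Int

/-- **Curve case, `k·f(k)`.**
For integers `c, d` and `f(k) = d·k + c`, the subgroup of `ℤ` generated by
`{ k·(d·k + c) : k ∈ ℤ }` equals the subgroup generated by `{d + c, 2d}`;
equivalently `gcd{ k·f(k) : k ∈ ℤ } = gcd(d + c, 2d)`. -/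
theorem curve_gcd_mul_self (c d : ℤ) :
    AddSubgroup.closure {x : ℤ | ∃ k : ℤ, x = k * (d * k + c)} =
      AddSubgroup.closure {d + c, 2 * d} := by
  refine le_antisymm ((AddSubgroup.closure_le _).2 ?_) ((AddSubgroup.closure_le _).2 ?_)
  · rintro _ ⟨k, rfl⟩
    exact Int.mul_mul_add_mem_closure c d k
  · have value_mem (k : ℤ) :
        k * (d * k + c) ∈ AddSubgroup.closure {x : ℤ | ∃ k : ℤ, x = k * (d * k + c)} :=
      AddSubgroup.subset_closure ⟨k, rfl⟩
    rintro _ (rfl | rfl)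
    · simpa using value_mem 1
    · have two_mul_eq : 2 * d = 2 * (d * 2 + c) - 2 * (1 * (d * 1 + c)) := by ring
      rw [two_mul_eq]
      exact sub_mem (value_mem 2) (AddSubgroup.int_mul_mem 2 (value_mem 1))
end

section
/- Let u, v, w be integers and define f : ℤ → ℚ by f(k) = (u·k³)/6 − (v·k²)/4 + (w·k)/12 + 1, and assume f(k) ∈ ℤ for every integer k. If m is a positive integer such that m divides k·f(k) for every integer k, then 2u ≡ 6 (mod m) and v ≡ 4 (mod 2m). (In the geometric setting, u = D³, v = D²·K_X, w = D·(K_X² + c₂) and f(k) = χ(kD) for a divisor D on a smooth threefold X of arithmetic genus 0, by Hirzebruch–Riemann–Roch; the hypothesis holds when m is the Amitsur period of D.) -/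
/-!
Clearing denominators, `12 f(k) = 2u k³ - 3v k² + w k + 12`, and the values at `k = 1, -1, 2`
combine to `4 - v = 2 (f(1) + f(-1))` and `6 - 2u = 6 f(1) + 2 f(-1) - 2 f(2)`, in which `w`
cancels. The divisibility hypothesis at `k = 1, -1, 2` gives `m ∣ f(1)`, `m ∣ f(-1)` and
`m ∣ 2 f(2)`, hence `m ∣ 6 - 2u` and `2m ∣ 4 - v`.
-/

theorem twelve_mul_eq_of_cast_eq {u v w : ℤ} {f : ℤ → ℤ}
    (hf : ∀ k : ℤ, (f k : ℚ) =
      (u : ℚ) * k ^ 3 / 6 - (v : ℚ) * k ^ 2 / 4 + (w : ℚ) * k / 12 + 1) (k : ℤ) :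
    12 * f k = 2 * u * k ^ 3 - 3 * v * k ^ 2 + w * k + 12 := by
  have h : (12 : ℚ) * f k = 2 * u * k ^ 3 - 3 * v * k ^ 2 + w * k + 12 := by
    rw [hf]; ring
  exact_mod_cast h

section TwelveMulEq

variable {u v w : ℤ} {f : ℤ → ℤ}

theorem four_sub_eq_two_mul_add
    (hf : ∀ k : ℤ, 12 * f k = 2 * u * k ^ 3 - 3 * v * k ^ 2 + w * k + 12) :
    4 - v = 2 * (f 1 + f (-1)) := by
  linarith [hf 1, hf (-1)]

theorem six_sub_two_mul_eq
    (hf : ∀ k : ℤ, 12 * f k = 2 * u * k ^ 3 - 3 * v * k ^ 2 + w * k + 12) :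
    6 - 2 * u = 6 * f 1 + 2 * f (-1) - 2 * f 2 := by
  linarith [hf 1, hf (-1), hf 2]

end TwelveMulEq

theorem threefold_congruences_general (u v w : ℤ) (fI : ℤ → ℤ)
    (hfI : ∀ k : ℤ, (fI k : ℚ) =
      (u : ℚ) * k ^ 3 / 6 - (v : ℚ) * k ^ 2 / 4 + (w : ℚ) * k / 12 + 1)
    (m : ℤ) (hdvd : ∀ k : ℤ, m ∣ k * fI k) :
    2 * u ≡ 6 [ZMOD m] ∧ v ≡ 4 [ZMOD 2 * m] := by
  have h12 := twelve_mul_eq_of_cast_eq hfI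
  have h_one : m ∣ fI 1 := by simpa using hdvd 1
  have h_neg_one : m ∣ fI (-1) := by simpa using hdvd (-1)
  have h_two : m ∣ 2 * fI 2 := hdvd 2
  refine ⟨Int.modEq_iff_dvd.mpr ?_, Int.modEq_iff_dvd.mpr ?_⟩
  · rw [six_sub_two_mul_eq h12]
    exact ((h_one.mul_left 6).add (h_neg_one.mul_left 2)).sub h_two
  · rw [four_sub_eq_two_mul_add h12]
    exact mul_dvd_mul_left 2 (h_one.add h_neg_one)

/-- **Threefold case.**
Let `u, v, w` be integers and `f : ℤ → ℚ` given by
`f(k) = u·k³/6 − v·k²/4 + w·k/12 + 1`, taking integer values on `ℤ`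
(with integer value function `fI`).  If `m` is a positive integer dividing `k·f(k)`
for every integer `k`, then `2u ≡ 6 (mod m)` and `v ≡ 4 (mod 2m)`. -/
theorem threefold_congruences (u v w : ℤ) (fI : ℤ → ℤ)
    (hfI : ∀ k : ℤ, (fI k : ℚ) =
      (u : ℚ) * k ^ 3 / 6 - (v : ℚ) * k ^ 2 / 4 + (w : ℚ) * k / 12 + 1)
    (m : ℤ) (hm : 0 < m) (hdvd : ∀ k : ℤ, m ∣ k * fI k) :
    2 * u ≡ 6 [ZMOD m] ∧ v ≡ 4 [ZMOD 2 * m] :=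
  threefold_congruences_general u v w fI hfI m hdvd
end

section
/- Let e be an integer and define χ : ℤ × ℤ → ℤ by χ(a,b) = −e·(a(a−1)/2) + a·b + (1−e)·a + b + 1. Let P be the subgroup of ℤ² generated by { χ(a,b)·(a,b) : (a,b) ∈ ℤ² }. If e is odd, then P = ℤ². If e is even, then P = { (c,d) ∈ ℤ² : c and d are both even } = 2ℤ × 2ℤ. (Consequently, for the Hirzebruch surface of degree e with trivial action on the Picard group, the numerical Amitsur group Am^χ is trivial if e is odd and isomorphic to (ℤ/2ℤ)² if e is even.) -/
/-- **Hirzebruch surfaces.**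
Let `e` be an integer and `χ(a,b) = −e·(a(a−1)/2) + ab + (1−e)a + b + 1`
(encoded by `2·χ(a,b) = −e·a(a−1) + 2ab + 2(1−e)a + 2b + 2`).  Let `P ≤ ℤ²` be the
subgroup generated by `{ χ(a,b)·(a,b) : (a,b) ∈ ℤ² }`.  If `e` is odd then `P = ℤ²`,
and if `e` is even then `P = 2ℤ × 2ℤ`. -/
theorem hirzebruch_numerical_pic (e : ℤ) (χ : ℤ → ℤ → ℤ)
    (hχ : ∀ a b : ℤ, 2 * χ a b =
      -e * (a * (a - 1)) + 2 * (a * b) + 2 * ((1 - e) * a) + 2 * b + 2) :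
    (Odd e →
      AddSubgroup.closure {v : ℤ × ℤ | ∃ a b : ℤ, v = χ a b • ((a, b) : ℤ × ℤ)} = ⊤) ∧
    (Even e →
      ∀ v : ℤ × ℤ,
        v ∈ AddSubgroup.closure {v : ℤ × ℤ | ∃ a b : ℤ, v = χ a b • ((a, b) : ℤ × ℤ)} ↔
          (2 ∣ v.1 ∧ 2 ∣ v.2)) := by
  set S : Set (ℤ × ℤ) := {v : ℤ × ℤ | ∃ a b : ℤ, v = χ a b • ((a, b) : ℤ × ℤ)} with hS
  have h01 : χ 0 1 = 2 := by have := hχ 0 1; linarith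
  have h1 : ∀ b : ℤ, χ 1 b = 2 * b + 2 - e := by intro b; have := hχ 1 b; linarith
  have m02 : ((0, 2) : ℤ × ℤ) ∈ AddSubgroup.closure S := by
    apply AddSubgroup.subset_closure
    exact ⟨0, 1, by rw [h01]; rfl⟩
  constructor
  · rintro ⟨k, hk⟩
    have m1 : ((1, k) : ℤ × ℤ) ∈ AddSubgroup.closure S := by
      have hχ1 : χ 1 k = 1 := by rw [h1 k]; omega
      have : ((1, k) : ℤ × ℤ) = χ 1 k • ((1, k) : ℤ × ℤ) := by
        rw [hχ1, one_smul]
      exact AddSubgroup.subset_closure ⟨1, k, this⟩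
    have m3 : ((3, 3 * (k + 1)) : ℤ × ℤ) ∈ AddSubgroup.closure S := by
      have hχ3 : χ 1 (k + 1) = 3 := by rw [h1 (k + 1)]; omega
      have : ((3, 3 * (k + 1)) : ℤ × ℤ) = χ 1 (k + 1) • ((1, k + 1) : ℤ × ℤ) := by
        rw [hχ3]; simp only [Prod.smul_mk, smul_eq_mul, Prod.mk.injEq]
        exact ⟨by ring, trivial⟩
      exact AddSubgroup.subset_closure ⟨1, k + 1, this⟩
    have m03 : ((0, 3) : ℤ × ℤ) ∈ AddSubgroup.closure S := by
      have h := sub_mem m3 (zsmul_mem m1 3)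
      have heq : ((0, 3) : ℤ × ℤ) = (3, 3 * (k + 1)) - (3 : ℤ) • (1, k) := by
        simp [Prod.ext_iff]; ring
      rwa [heq]
    have m01 : ((0, 1) : ℤ × ℤ) ∈ AddSubgroup.closure S := by
      have h := sub_mem m03 m02
      have heq : ((0, 1) : ℤ × ℤ) = (0, 3) - (0, 2) := by simp [Prod.ext_iff]
      rwa [heq]
    have m10 : ((1, 0) : ℤ × ℤ) ∈ AddSubgroup.closure S := by
      have h := sub_mem m1 (zsmul_mem m01 k)
      have heq : ((1, 0) : ℤ × ℤ) = (1, k) - (k : ℤ) • (0, 1) := by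
        simp [Prod.ext_iff]
      rwa [heq]
    rw [AddSubgroup.eq_top_iff']
    intro v
    have hv : v = v.1 • ((1, 0) : ℤ × ℤ) + v.2 • ((0, 1) : ℤ × ℤ) := by
      simp [Prod.ext_iff]
    rw [hv]
    exact add_mem (zsmul_mem m10 _) (zsmul_mem m01 _)
  · rintro ⟨k, hk⟩ v
    have hχk : ∀ a b : ℤ, χ a b = -k * ((a - 1) * a) + a * b + (1 - 2 * k) * a + b + 1 := by
      intro a b
      have h2 : 2 * χ a b = 2 * (-k * ((a - 1) * a) + a * b + (1 - 2 * k) * a + b + 1) := by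
        rw [hχ a b, hk]; ring
      exact mul_left_cancel₀ two_ne_zero h2
    constructor
    · intro hv
      let T : AddSubgroup (ℤ × ℤ) :=
        { carrier := {w : ℤ × ℤ | 2 ∣ w.1 ∧ 2 ∣ w.2}
          zero_mem' := ⟨dvd_zero 2, dvd_zero 2⟩
          add_mem' := fun h h' => ⟨dvd_add h.1 h'.1, dvd_add h.2 h'.2⟩
          neg_mem' := fun h => ⟨dvd_neg.mpr h.1, dvd_neg.mpr h.2⟩ }
      have hle : AddSubgroup.closure S ≤ T := by
        rw [AddSubgroup.closure_le]
        rintro _ ⟨a, b, rfl⟩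
        obtain ⟨p, hp⟩ : Even ((a - 1) * a) := by
          have := Int.even_mul_succ_self (a - 1); simpa using this
        obtain ⟨q, hq⟩ : Even (b * (b + 1)) := Int.even_mul_succ_self b
        obtain ⟨r, hr⟩ : Even (a * (a + 1)) := Int.even_mul_succ_self a
        constructor
        · refine ⟨-(k * p * a) + (b + 1) * r - k * a ^ 2, ?_⟩
          show χ a b * a = _
          linear_combination a * (hχk a b) - (k * a) * hp + (b + 1) * hr
        · refine ⟨-(k * p * b) + (a + 1) * q - k * a * b, ?_⟩
          show χ a b * b = _
          linear_combination b * (hχk a b) - (k * b) * hp + (a + 1) * hq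
      exact hle hv
    · rintro ⟨⟨c, hc⟩, ⟨d, hd⟩⟩
      have m2k : ((2, 2 * k) : ℤ × ℤ) ∈ AddSubgroup.closure S := by
        have hχ2 : χ 1 k = 2 := by rw [h1 k]; omega
        have : ((2, 2 * k) : ℤ × ℤ) = χ 1 k • ((1, k) : ℤ × ℤ) := by
          rw [hχ2]; simp only [Prod.smul_mk, smul_eq_mul, Prod.mk.injEq]
          exact ⟨by ring, trivial⟩
        exact AddSubgroup.subset_closure ⟨1, k, this⟩
      have m20 : ((2, 0) : ℤ × ℤ) ∈ AddSubgroup.closure S := by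
        have h := sub_mem m2k (zsmul_mem m02 k)
        have heq : ((2, 0) : ℤ × ℤ) = (2, 2 * k) - (k : ℤ) • (0, 2) := by
          simp [Prod.ext_iff]; ring
        rwa [heq]
      have hv : v = c • ((2, 0) : ℤ × ℤ) + d • ((0, 2) : ℤ × ℤ) := by
        simp [Prod.ext_iff]; omega
      rw [hv]
      exact add_mem (zsmul_mem m20 _) (zsmul_mem m02 _)
end

section
/- Define χ : ℤ × ℤ → ℤ by χ(m,n) = 2mn − n² + m + n + 1. Then for all integers m, n, the integer χ(m,n)·m = 2m²n − n²m + m² + mn + m is even; consequently every element of the subgroup of ℤ² generated by { χ(m,n)·(m,n) : (m,n) ∈ ℤ² } has even first coordinate, and in particular (1,0) does not lie in this subgroup. -/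
/-- **Del Pezzo surface of degree 6, the subgroup generated by `χ(L)·L` over
invariant classes.**
With `χ(m,n) = 2mn − n² + m + n + 1`, the integer `χ(m,n)·m` is even for all
integers `m, n`; consequently every element of the subgroup of `ℤ²` generated by
`{ χ(m,n)·(m,n) : (m,n) ∈ ℤ² }` has even first coordinate, and in particular
`(1,0)` does not lie in this subgroup. -/
theorem dP6_chi_span (χ : ℤ → ℤ → ℤ)
    (hχ : ∀ m n : ℤ, χ m n = 2 * m * n - n ^ 2 + m + n + 1) :
    (∀ m n : ℤ, 2 ∣ χ m n * m) ∧
    (∀ v : ℤ × ℤ,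
      v ∈ AddSubgroup.closure {w : ℤ × ℤ | ∃ m n : ℤ, w = χ m n • ((m, n) : ℤ × ℤ)} →
        2 ∣ v.1) ∧
    ((1, 0) ∉
      AddSubgroup.closure {w : ℤ × ℤ | ∃ m n : ℤ, w = χ m n • ((m, n) : ℤ × ℤ)}) := by
  have key : ∀ m n : ℤ, 2 ∣ χ m n * m := by
    intro m n
    obtain ⟨a, ha⟩ : 2 ∣ m * (m + 1) := (Int.even_mul_succ_self m).two_dvd
    obtain ⟨b, hb⟩ : 2 ∣ n * (n + 1) := (Int.even_mul_succ_self n).two_dvd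
    refine ⟨m * m * n + a - m * b + m * n, ?_⟩
    rw [hχ]; linear_combination ha - m * hb
  have h2 : ∀ v : ℤ × ℤ,
      v ∈ AddSubgroup.closure {w : ℤ × ℤ | ∃ m n : ℤ, w = χ m n • ((m, n) : ℤ × ℤ)} →
        2 ∣ v.1 := by
    intro v hv
    induction hv using AddSubgroup.closure_induction with
    | mem w hw =>
      obtain ⟨m, n, rfl⟩ := hw
      simpa using key m n
    | zero => simp
    | add x y _ _ hx hy => exact dvd_add hx hy
    | neg x _ hx => exact dvd_neg.mpr hx
  refine ⟨key, h2, fun h => ?_⟩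
  have := h2 _ h
  omega
end
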